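/- arXiv:2402.03030 — 4 statements merged into one kernel-verified Lean document; each statement's English description precedes it below -/
import Mathlib

section
/- Let f : ℝⁿ → [0,∞) be a probability density function. Define the layered entropy h_L(f) = ∫₀^∞ μ(L_t⁺(f)) log μ(L_t⁺(f)) dt, where L_t⁺(f) = {z : f(z) ≥ t}, and define h_∞(f) = -log(ess sup f). Then h_∞(f) ≤ h_L(f) ≤ h(f), where h(f) = -∫ f log f is the differential entropy, provided these quantities are well-defined and finite. -/
/-!
Let `a(t) = μ {f ≥ t}`. By the layer-cake formula `a` is a probability density on `(0, ∞)`, and it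
vanishes beyond `M = ess sup f`; Jensen's inequality for the convex function `x log x` on the
interval `(0, M]` gives `h_∞(f) ≤ h_L(f)`.

For the upper bound, consider the uniform probability measure `ν` on the region
`U = {(z, t) | 0 < t ≤ f z}` under the graph of `f`. Its two marginals have densities `f` and `a`,
so `∫ log (a t) dν = ∫ a log a` and `∫ log (f z) dν = ∫ f log f`, while by Tonelli
`∫ a(t) f(z) dν ≤ ∫ a = 1`. Integrating `log (a(t) f(z)) ≤ a(t) f(z) - 1` against `ν` gives
`∫ a log a + ∫ f log f ≤ 0`, i.e. `h_L(f) ≤ h(f)`.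
-/

open MeasureTheory

/-- Layered entropy `h_L(f) = ∫₀^∞ μ(L_t⁺(f)) log₂ μ(L_t⁺(f)) dt` of a density `f`,
where `L_t⁺(f) = {z : f(z) ≥ t}`. -/
noncomputable def layeredEntropy {n : ℕ} (f : EuclideanSpace ℝ (Fin n) → ℝ) : ℝ :=
  ∫ t in Set.Ioi (0:ℝ),
    (volume {z | t ≤ f z}).toReal * Real.logb 2 (volume {z | t ≤ f z}).toReal

open Set Real
open scoped ENNReal

section UnderGraph

variable {α : Type*} [MeasurableSpace α] {μ : Measure α} {f : α → ℝ}

/-- Unlike `regionBetween`, the vertical fibres are half-open `Ioc 0 (f z)`, so that the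
horizontal fibre at height `t > 0` is exactly the superlevel set `{z | t ≤ f z}`. -/
def underGraph (f : α → ℝ) : Set (α × ℝ) := {p | p.2 ∈ Ioc 0 (f p.1)}

lemma measurableSet_underGraph (hf : Measurable f) : MeasurableSet (underGraph f) :=
  (measurableSet_lt measurable_const measurable_snd).inter
    (measurableSet_le measurable_snd (hf.comp measurable_fst))

lemma measurable_measure_superlevel (μ : Measure α) (f : α → ℝ) :
    Measurable fun t => μ {z | t ≤ f z} :=
  Antitone.measurable fun _ _ hst => measure_mono fun _ hz => hst.trans hz

lemma measurable_measure_superlevel_mul (hf : Measurable f) :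
    Measurable fun p : α × ℝ => μ {z | p.2 ≤ f z} * ENNReal.ofReal (f p.1) :=
  (measurable_measure_superlevel μ f |>.comp measurable_snd).mul
    (hf.comp measurable_fst).ennreal_ofReal

lemma map_fst_restrict_underGraph (hf : Measurable f) :
    ((μ.prod volume).restrict (underGraph f)).map Prod.fst
      = μ.withDensity fun z => ENNReal.ofReal (f z) := by
  ext s hs
  rw [Measure.map_apply measurable_fst hs, Measure.restrict_apply (measurable_fst hs),
    Measure.prod_apply (measurable_fst hs |>.inter (measurableSet_underGraph hf)),
    withDensity_apply _ hs, ← lintegral_indicator hs]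
  congr 1 with z
  by_cases hz : z ∈ s
  · have : Prod.mk z ⁻¹' (Prod.fst ⁻¹' s ∩ underGraph f) = Ioc 0 (f z) := by
      ext t; simp [underGraph, hz]
    simp [this, hz]
  · have : Prod.mk z ⁻¹' (Prod.fst ⁻¹' s ∩ underGraph f) = ∅ := by
      ext t; simp [hz]
    simp [this, hz]

lemma isProbabilityMeasure_restrict_underGraph (hf : Measurable f)
    (hf1 : ∫⁻ z, ENNReal.ofReal (f z) ∂μ = 1) :
    IsProbabilityMeasure ((μ.prod volume).restrict (underGraph f)) := by
  constructor
  rw [← preimage_univ (f := Prod.fst), ← Measure.map_apply measurable_fst MeasurableSet.univ,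
    map_fst_restrict_underGraph hf, withDensity_apply _ MeasurableSet.univ, Measure.restrict_univ,
    hf1]

variable [SFinite μ]

lemma map_snd_restrict_underGraph (hf : Measurable f) :
    ((μ.prod volume).restrict (underGraph f)).map Prod.snd
      = (volume.restrict (Ioi 0)).withDensity fun t => μ {z | t ≤ f z} := by
  ext s hs
  rw [Measure.map_apply measurable_snd hs, Measure.restrict_apply (measurable_snd hs),
    Measure.prod_apply_symm (measurable_snd hs |>.inter (measurableSet_underGraph hf)),
    withDensity_apply _ hs, Measure.restrict_restrict hs,
    ← lintegral_indicator (hs.inter measurableSet_Ioi)]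
  congr 1 with t
  by_cases ht : t ∈ s ∩ Ioi 0
  · have : (fun z => (z, t)) ⁻¹' (Prod.snd ⁻¹' s ∩ underGraph f) = {z | t ≤ f z} := by
      ext z; simp [underGraph, ht.1, mem_Ioi.1 ht.2]
    simp [this, ht]
  · have : (fun z => (z, t)) ⁻¹' (Prod.snd ⁻¹' s ∩ underGraph f) = ∅ := by
      ext z; simp only [mem_inter_iff, mem_Ioi, not_and] at ht; simp [underGraph]; tauto
    simp [this, ht]

lemma setLIntegral_underGraph (hf : Measurable f) {F : α × ℝ → ℝ≥0∞} (hF : Measurable F) :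
    ∫⁻ p in underGraph f, F p ∂μ.prod volume
      = ∫⁻ t in Ioi 0, ∫⁻ z in {z | t ≤ f z}, F (z, t) ∂μ := by
  rw [← lintegral_indicator (measurableSet_underGraph hf),
    lintegral_prod_symm _ (hF.indicator (measurableSet_underGraph hf)).aemeasurable,
    ← lintegral_indicator measurableSet_Ioi]
  congr 1 with t
  by_cases ht : 0 < t
  · rw [indicator_of_mem (mem_Ioi.2 ht),
      ← lintegral_indicator (measurableSet_le measurable_const hf)]
    congr 1 with z
    by_cases hz : t ≤ f z <;> simp [underGraph, indicator, ht, hz]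
  · simp [underGraph, indicator, ht]

end UnderGraph

section WithDensity

variable {β γ : Type*} [MeasurableSpace β] [MeasurableSpace γ] {ν : Measure β} {ρ : Measure γ}
  {φ : β → γ} {d : γ → ℝ≥0∞} {g : γ → ℝ}

lemma integrable_comp_of_map_eq_withDensity (hφ : Measurable φ)
    (hν : ν.map φ = ρ.withDensity d) (hd : Measurable d) (hd_lt_top : ∀ᵐ x ∂ρ, d x < ∞)
    (hg : Measurable g) (hdg : Integrable (fun x => (d x).toReal * g x) ρ) :
    Integrable (fun p => g (φ p)) ν := by
  have := (integrable_withDensity_iff_integrable_smul' hd hd_lt_top).2 hdg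
  rw [← hν] at this
  exact (integrable_map_measure hg.aestronglyMeasurable hφ.aemeasurable).1 this

lemma integral_comp_of_map_eq_withDensity (hφ : Measurable φ)
    (hν : ν.map φ = ρ.withDensity d) (hd : Measurable d) (hd_lt_top : ∀ᵐ x ∂ρ, d x < ∞)
    (hg : Measurable g) :
    ∫ p, g (φ p) ∂ν = ∫ x, (d x).toReal * g x ∂ρ := by
  rw [← integral_map hφ.aemeasurable hg.aestronglyMeasurable, hν,
    integral_withDensity_eq_integral_toReal_smul hd hd_lt_top]
  rfl

end WithDensity

lemma neg_log_measureReal_le_setIntegral_mul_log {β : Type*} [MeasurableSpace β]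
    {ρ : Measure β} {s : Set β} {a : β → ℝ} (hs : ρ s ≠ ∞) (ha0 : ∀ᵐ x ∂ρ.restrict s, 0 ≤ a x)
    (ha : IntegrableOn a s ρ) (ha1 : ∫ x in s, a x ∂ρ = 1)
    (hal : IntegrableOn (fun x => a x * log (a x)) s ρ) :
    -log (ρ.real s) ≤ ∫ x in s, a x * log (a x) ∂ρ := by
  have hs0 : ρ s ≠ 0 := fun h => by simp [Measure.restrict_eq_zero.2 h] at ha1
  have hM : 0 < ρ.real s := ENNReal.toReal_pos hs0 hs
  have jensen := convexOn_mul_log.map_set_average_le continuous_mul_log.continuousOn isClosed_Ici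
    hs0 hs ha0 ha hal
  rwa [setAverage_eq, setAverage_eq, ha1, smul_eq_mul, smul_eq_mul, mul_one, log_inv,
    mul_le_mul_iff_right₀ (inv_pos.2 hM)] at jensen

section Superlevel

variable {α : Type*} [MeasurableSpace α] {μ : Measure α} {f : α → ℝ}

lemma measure_superlevel_eq_zero_of_essSup_lt {t : ℝ}
    (ht : essSup (fun z => ENNReal.ofReal (f z)) μ < ENNReal.ofReal t) :
    μ {z | t ≤ f z} = 0 :=
  measure_mono_null (fun _ hz => ht.trans_le (ENNReal.ofReal_le_ofReal hz))
    (meas_essSup_lt (f := fun z => ENNReal.ofReal (f z)))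

lemma toReal_measure_superlevel_mul (hf0 : ∀ z, 0 ≤ f z) (p : α × ℝ) :
    (μ {z | p.2 ≤ f z} * ENNReal.ofReal (f p.1)).toReal = (μ {z | p.2 ≤ f z}).toReal * f p.1 := by
  rw [ENNReal.toReal_mul, ENNReal.toReal_ofReal (hf0 _)]

variable (hf : Measurable f) (hf0 : ∀ z, 0 ≤ f z) (hf1 : ∫⁻ z, ENNReal.ofReal (f z) ∂μ = 1)
include hf hf0 hf1

lemma lintegral_measure_superlevel_eq_one : ∫⁻ t in Ioi 0, μ {z | t ≤ f z} = 1 :=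
  (lintegral_eq_lintegral_meas_le μ (ae_of_all _ hf0) hf.aemeasurable).symm.trans hf1

lemma ae_measure_superlevel_lt_top : ∀ᵐ t ∂volume.restrict (Ioi 0), μ {z | t ≤ f z} < ∞ :=
  ae_lt_top (measurable_measure_superlevel μ f)
    (by rw [lintegral_measure_superlevel_eq_one hf hf0 hf1]; exact ENNReal.one_ne_top)

lemma integrableOn_measure_superlevel :
    IntegrableOn (fun t => (μ {z | t ≤ f z}).toReal) (Ioi 0) :=
  integrable_toReal_of_lintegral_ne_top (measurable_measure_superlevel μ f).aemeasurable
    (by rw [lintegral_measure_superlevel_eq_one hf hf0 hf1]; exact ENNReal.one_ne_top)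

lemma setIntegral_measure_superlevel_eq_one :
    ∫ t in Ioi 0, (μ {z | t ≤ f z}).toReal = 1 := by
  rw [integral_toReal (measurable_measure_superlevel μ f).aemeasurable
    (ae_measure_superlevel_lt_top hf hf0 hf1), lintegral_measure_superlevel_eq_one hf hf0 hf1,
    ENNReal.toReal_one]

theorem neg_log_essSup_le_setIntegral_mul_log_measure_superlevel
    (hess : essSup (fun z => ENNReal.ofReal (f z)) μ ≠ ∞)
    (hLint : IntegrableOn
      (fun t => (μ {z | t ≤ f z}).toReal * log (μ {z | t ≤ f z}).toReal) (Ioi 0)) :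
    -log (essSup (fun z => ENNReal.ofReal (f z)) μ).toReal
      ≤ ∫ t in Ioi 0, (μ {z | t ≤ f z}).toReal * log (μ {z | t ≤ f z}).toReal := by
  set M := (essSup (fun z => ENNReal.ofReal (f z)) μ).toReal
  have hM0 : essSup (fun z => ENNReal.ofReal (f z)) μ ≠ 0 := by
    intro h
    have := lintegral_mono_ae (ae_le_essSup (f := fun z => ENNReal.ofReal (f z)) (μ := μ))
    simp [hf1, h] at this
  have hM : 0 < M := ENNReal.toReal_pos hM0 hess
  have hvanish : ∀ t ∈ Ioi 0 \ Ioc 0 M, μ {z | t ≤ f z} = 0 := fun t ⟨ht0, htM⟩ =>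
    measure_superlevel_eq_zero_of_essSup_lt <| by
      rw [← ENNReal.ofReal_toReal hess, ENNReal.ofReal_lt_ofReal_iff ht0]
      exact lt_of_not_ge fun h => htM ⟨ht0, h⟩
  have hsub : Ioc 0 M ⊆ Ioi 0 := Ioc_subset_Ioi_self
  have key := neg_log_measureReal_le_setIntegral_mul_log (ρ := volume) (s := Ioc 0 M)
    measure_Ioc_lt_top.ne (ae_of_all _ fun _ => ENNReal.toReal_nonneg)
    ((integrableOn_measure_superlevel hf hf0 hf1).mono_set hsub)
    (by rw [← setIntegral_eq_of_subset_of_forall_sdiff_eq_zero measurableSet_Ioi hsub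
          fun t ht => by simp [hvanish t ht], setIntegral_measure_superlevel_eq_one hf hf0 hf1])
    (hLint.mono_set hsub)
  rwa [Real.volume_real_Ioc_of_le hM.le, sub_zero,
    ← setIntegral_eq_of_subset_of_forall_sdiff_eq_zero measurableSet_Ioi hsub
      fun t ht => by simp [hvanish t ht]] at key

variable [SFinite μ]

lemma setLIntegral_underGraph_measure_superlevel_mul_le_one :
    ∫⁻ p in underGraph f, μ {z | p.2 ≤ f z} * ENNReal.ofReal (f p.1) ∂μ.prod volume ≤ 1 := by
  rw [setLIntegral_underGraph hf (measurable_measure_superlevel_mul hf)]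
  calc ∫⁻ t in Ioi 0, ∫⁻ z in {z | t ≤ f z}, μ {z | t ≤ f z} * ENNReal.ofReal (f z) ∂μ
      = ∫⁻ t in Ioi 0, μ {z | t ≤ f z} * ∫⁻ z in {z | t ≤ f z}, ENNReal.ofReal (f z) ∂μ := by
        simp_rw [lintegral_const_mul _ hf.ennreal_ofReal]
    _ ≤ ∫⁻ t in Ioi 0, μ {z | t ≤ f z} * 1 := by
        gcongr
        exact hf1 ▸ setLIntegral_le_lintegral _ _
    _ = 1 := by simp_rw [mul_one]; exact lintegral_measure_superlevel_eq_one hf hf0 hf1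

lemma integrableOn_underGraph_measure_superlevel_mul :
    IntegrableOn (fun p => (μ {z | p.2 ≤ f z}).toReal * f p.1) (underGraph f) (μ.prod volume) := by
  simpa only [IntegrableOn, toReal_measure_superlevel_mul hf0] using
    integrable_toReal_of_lintegral_ne_top (measurable_measure_superlevel_mul hf).aemeasurable
      (setLIntegral_underGraph_measure_superlevel_mul_le_one hf hf0 hf1
        |>.trans_lt ENNReal.one_lt_top).ne

lemma setIntegral_underGraph_measure_superlevel_mul_le_one :
    ∫ p in underGraph f, (μ {z | p.2 ≤ f z}).toReal * f p.1 ∂μ.prod volume ≤ 1 := by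
  have hG := measurable_measure_superlevel_mul (μ := μ) hf
  have hG_le := setLIntegral_underGraph_measure_superlevel_mul_le_one hf hf0 hf1
  simp_rw [← toReal_measure_superlevel_mul hf0]
  rw [integral_toReal hG.aemeasurable (ae_lt_top hG (hG_le.trans_lt ENNReal.one_lt_top).ne)]
  simpa using ENNReal.toReal_mono ENNReal.one_ne_top hG_le

lemma ae_restrict_underGraph_pos :
    ∀ᵐ p ∂(μ.prod volume).restrict (underGraph f),
      0 < (μ {z | p.2 ≤ f z}).toReal ∧ 0 < f p.1 := by
  have h_snd : ∀ᵐ t ∂((μ.prod volume).restrict (underGraph f)).map Prod.snd,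
      0 < (μ {z | t ≤ f z}).toReal := by
    rw [map_snd_restrict_underGraph hf, ae_withDensity_iff (measurable_measure_superlevel μ f)]
    filter_upwards [ae_measure_superlevel_lt_top hf hf0 hf1] with t ht h0
    exact ENNReal.toReal_pos h0 ht.ne
  filter_upwards [ae_of_ae_map measurable_snd.aemeasurable h_snd,
    ae_restrict_mem (measurableSet_underGraph hf)] with p hp hpU
  exact ⟨hp, hpU.1.trans_le hpU.2⟩

theorem setIntegral_mul_log_measure_superlevel_le_neg_integral_mul_log
    (hLint : IntegrableOn
      (fun t => (μ {z | t ≤ f z}).toReal * log (μ {z | t ≤ f z}).toReal) (Ioi 0))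
    (hhint : Integrable (fun z => f z * log (f z)) μ) :
    ∫ t in Ioi 0, (μ {z | t ≤ f z}).toReal * log (μ {z | t ≤ f z}).toReal
      ≤ -∫ z, f z * log (f z) ∂μ := by
  set ν := (μ.prod volume).restrict (underGraph f)
  set a : ℝ → ℝ := fun t => (μ {z | t ≤ f z}).toReal
  have := isProbabilityMeasure_restrict_underGraph hf hf1
  have hA := measurable_measure_superlevel μ f
  have hfst := map_fst_restrict_underGraph (μ := μ) hf
  have hsnd := map_snd_restrict_underGraph (μ := μ) hf
  have hA_lt_top := ae_measure_superlevel_lt_top hf hf0 hf1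
  have hf_lt_top : ∀ᵐ z ∂μ, ENNReal.ofReal (f z) < ∞ := ae_of_all _ fun _ => ENNReal.ofReal_lt_top
  have hofReal : ∀ z, (ENNReal.ofReal (f z)).toReal = f z := fun z => ENNReal.toReal_ofReal (hf0 z)
  have hlogf_int : Integrable (fun p => log (f p.1)) ν :=
    integrable_comp_of_map_eq_withDensity (g := fun z => log (f z)) measurable_fst hfst
      hf.ennreal_ofReal hf_lt_top (measurable_log.comp hf) (by simpa only [hofReal] using hhint)
  have hlogf : ∫ p, log (f p.1) ∂ν = ∫ z, f z * log (f z) ∂μ :=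
    (integral_comp_of_map_eq_withDensity (g := fun z => log (f z)) measurable_fst hfst
      hf.ennreal_ofReal hf_lt_top (measurable_log.comp hf)).trans (by simp only [hofReal])
  have hloga_int : Integrable (fun p => log (a p.2)) ν :=
    integrable_comp_of_map_eq_withDensity (g := fun t => log (a t)) measurable_snd hsnd hA
      hA_lt_top (measurable_log.comp hA.ennreal_toReal) hLint
  have hloga : ∫ p, log (a p.2) ∂ν = ∫ t in Ioi 0, a t * log (a t) :=
    integral_comp_of_map_eq_withDensity (g := fun t => log (a t)) measurable_snd hsnd hA
      hA_lt_top (measurable_log.comp hA.ennreal_toReal)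
  have hprod_int := integrableOn_underGraph_measure_superlevel_mul hf hf0 hf1
  calc ∫ t in Ioi 0, a t * log (a t)
      = ∫ p, (log (a p.2) + log (f p.1)) ∂ν - ∫ z, f z * log (f z) ∂μ := by
        rw [integral_add hloga_int hlogf_int, hloga, hlogf]; ring
    _ ≤ ∫ p, (a p.2 * f p.1 - 1) ∂ν - ∫ z, f z * log (f z) ∂μ := by
        gcongr ?_ - _
        refine integral_mono_ae (hloga_int.add hlogf_int) (hprod_int.sub (integrable_const 1)) ?_
        filter_upwards [ae_restrict_underGraph_pos hf hf0 hf1] with p hp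
        rw [← log_mul hp.1.ne' hp.2.ne']
        exact log_le_sub_one_of_pos (mul_pos hp.1 hp.2)
    _ ≤ -∫ z, f z * log (f z) ∂μ := by
        rw [integral_sub hprod_int (integrable_const 1), integral_const, probReal_univ,
          smul_eq_mul, mul_one]
        linarith [setIntegral_underGraph_measure_superlevel_mul_le_one hf hf0 hf1]

end Superlevel

theorem layered_entropy_bounds_general {n : ℕ} (f : EuclideanSpace ℝ (Fin n) → ℝ)
    (hf : Measurable f) (hf0 : ∀ z, 0 ≤ f z)
    (hf1 : ∫⁻ z, ENNReal.ofReal (f z) = 1)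
    (hess : essSup (fun z => ENNReal.ofReal (f z)) volume ≠ ⊤)
    (hLint : IntegrableOn
      (fun t => (volume {z | t ≤ f z}).toReal * Real.logb 2 (volume {z | t ≤ f z}).toReal)
      (Set.Ioi (0:ℝ)) volume)
    (hhint : Integrable (fun z => f z * Real.logb 2 (f z)) volume) :
    -Real.logb 2 (essSup (fun z => ENNReal.ofReal (f z)) volume).toReal ≤ layeredEntropy f
      ∧ layeredEntropy f ≤ -∫ z, f z * Real.logb 2 (f z) := by
  have hlog2 : 0 < (log 2)⁻¹ := inv_pos.2 (log_pos one_lt_two)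
  simp only [layeredEntropy, logb, div_eq_mul_inv, ← mul_assoc, IntegrableOn,
    integrable_mul_const_iff hlog2.ne'.isUnit, integral_mul_const, ← neg_mul] at hLint hhint ⊢
  exact ⟨mul_le_mul_of_nonneg_right
      (neg_log_essSup_le_setIntegral_mul_log_measure_superlevel hf hf0 hf1 hess hLint) hlog2.le,
    mul_le_mul_of_nonneg_right
      (setIntegral_mul_log_measure_superlevel_le_neg_integral_mul_log hf hf0 hf1 hLint hhint)
      hlog2.le⟩

/-- For a probability density `f` on `ℝⁿ` (with finite superlevel-set measures, finite
essential supremum, and the relevant integrands integrable so all quantities are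
well-defined and finite), `h_∞(f) ≤ h_L(f) ≤ h(f)`, where `h_∞(f) = -log₂ (ess sup f)` and
`h(f) = -∫ f log₂ f` is the differential entropy. -/
theorem layered_entropy_bounds {n : ℕ} (f : EuclideanSpace ℝ (Fin n) → ℝ)
    (hf : Measurable f) (hf0 : ∀ z, 0 ≤ f z)
    (hf1 : ∫⁻ z, ENNReal.ofReal (f z) = 1)
    (hfin : ∀ t > 0, volume {z | t ≤ f z} < ⊤)
    (hess : essSup (fun z => ENNReal.ofReal (f z)) volume ≠ ⊤)
    (hLint : IntegrableOn
      (fun t => (volume {z | t ≤ f z}).toReal * Real.logb 2 (volume {z | t ≤ f z}).toReal)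
      (Set.Ioi (0:ℝ)) volume)
    (hhint : Integrable (fun z => f z * Real.logb 2 (f z)) volume) :
    -Real.logb 2 (essSup (fun z => ENNReal.ofReal (f z)) volume).toReal ≤ layeredEntropy f
      ∧ layeredEntropy f ≤ -∫ z, f z * Real.logb 2 (f z) :=
  layered_entropy_bounds_general f hf hf0 hf1 hess hLint hhint
end

section
/- Let G ∈ ℝ^{n×n} be an invertible matrix defining the lattice GZⁿ, let P be a basic cell of the lattice (i.e., the translates P + Gj for j ∈ Zⁿ partition ℝⁿ), let Q_P : ℝⁿ → GZⁿ map each x to the unique lattice point y with x ∈ -P + y, and let V be uniformly distributed on P. Then for every fixed x ∈ ℝⁿ, the dithered quantization error Q_P(x - V) + V - x is uniformly distributed on P. -/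
/-!
Write the error as `r (v - x)`, where `r y = Q_P(-y) + y` reduces `y` modulo the lattice `Λ` into
`P`. Because `P` meets every coset of `Λ` exactly once, `r` is constant on cosets and is the
identity on `P`. Hence for measurable `A` the set `r⁻¹ A` is `Λ`-invariant, so it has the same
measure inside any two fundamental domains of `Λ`; comparing the translate `P - x` with `P` gives
`μ ((r ∘ (· - x))⁻¹ A ∩ P) = μ (r⁻¹ A ∩ (P - x)) = μ (r⁻¹ A ∩ P) = μ (A ∩ P)`.
-/

open MeasureTheory

def IsStrictAddFundamentalDomain {α : Type*} [AddGroup α] (Λ : AddSubgroup α) (P : Set α) :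
    Prop :=
  ∀ y : α, ∃! g : Λ, g +ᵥ y ∈ P

namespace IsStrictAddFundamentalDomain

section AddCommGroup

variable {α : Type*} [AddCommGroup α] {Λ : AddSubgroup α} {P : Set α}

theorem eq_of_sub_mem (hP : IsStrictAddFundamentalDomain Λ P) {a b : α} (ha : a ∈ P)
    (hb : b ∈ P) (hab : a - b ∈ Λ) : a = b := by
  have h := (hP b).unique (y₁ := ⟨a - b, hab⟩) (y₂ := 0)
    (by simpa [AddSubgroup.vadd_def] using ha) (by simpa using hb)
  simpa [sub_eq_zero] using congrArg Subtype.val h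

theorem preimage_add_right (hP : IsStrictAddFundamentalDomain Λ P) (x : α) :
    IsStrictAddFundamentalDomain Λ ((· + x) ⁻¹' P) := fun y => by
  simpa only [Set.mem_preimage, AddSubgroup.vadd_def, vadd_eq_add, add_assoc] using hP (y + x)

theorem reduction_add_eq (hP : IsStrictAddFundamentalDomain Λ P) {r : α → α}
    (hrP : ∀ y, r y ∈ P) (hr : ∀ y, r y - y ∈ Λ) {g : α} (hg : g ∈ Λ) (y : α) :
    r (g + y) = r y :=
  hP.eq_of_sub_mem (hrP _) (hrP _) (by
    convert Λ.add_mem (Λ.sub_mem (hr (g + y)) (hr y)) hg using 1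
    abel)

theorem reduction_eq_self (hP : IsStrictAddFundamentalDomain Λ P) {r : α → α}
    (hrP : ∀ y, r y ∈ P) (hr : ∀ y, r y - y ∈ Λ) {y : α} (hy : y ∈ P) : r y = y :=
  hP.eq_of_sub_mem (hrP y) hy (hr y)

end AddCommGroup

variable {α : Type*} [AddCommGroup α] [MeasurableSpace α] {μ : Measure α} {Λ : AddSubgroup α}
  {P s : Set α}

theorem isAddFundamentalDomain (hP : IsStrictAddFundamentalDomain Λ P) (hPm : MeasurableSet P) :
    IsAddFundamentalDomain Λ P μ :=
  .mk' hPm.nullMeasurableSet hP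

variable [MeasurableAdd α] [μ.IsAddLeftInvariant] [Countable Λ]

theorem map_reduction_restrict (hP : IsStrictAddFundamentalDomain Λ P) (hPm : MeasurableSet P)
    (hs : IsStrictAddFundamentalDomain Λ s) (hsm : MeasurableSet s) {r : α → α}
    (hrm : Measurable r) (hrP : ∀ y, r y ∈ P) (hr : ∀ y, r y - y ∈ Λ) :
    (μ.restrict s).map r = μ.restrict P := by
  ext A hA
  rw [Measure.map_apply hrm hA, Measure.restrict_apply (hrm hA), Measure.restrict_apply hA]
  have hinv : ∀ g : Λ, (fun y => g +ᵥ y) ⁻¹' (r ⁻¹' A) = r ⁻¹' A := fun g => by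
    ext y
    simp [AddSubgroup.vadd_def, hP.reduction_add_eq hrP hr g.2]
  have hfix : r ⁻¹' A ∩ P = A ∩ P := by
    ext y
    constructor <;> rintro ⟨hyA, hyP⟩ <;> refine ⟨?_, hyP⟩ <;>
      simpa [hP.reduction_eq_self hrP hr hyP] using hyA
  rw [(hs.isAddFundamentalDomain hsm).measure_set_eq (hP.isAddFundamentalDomain hPm) (hrm hA)
    hinv, hfix]

end IsStrictAddFundamentalDomain

theorem AddMonoidHom.isStrictAddFundamentalDomain_range {M α : Type*} [AddGroup M]
    [AddCommGroup α] (φ : M →+ α) {P : Set α} (hP : ∀ y, ∃! m, y - φ m ∈ P) :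
    IsStrictAddFundamentalDomain φ.range P := fun y => by
  obtain ⟨m, hm, huniq⟩ := hP y
  refine ⟨⟨-φ m, -m, map_neg φ m⟩, by simpa [AddSubgroup.vadd_def, neg_add_eq_sub] using hm, ?_⟩
  rintro ⟨_, m', rfl⟩ hm'
  have : -m' = m := huniq _ (by simpa [AddSubgroup.vadd_def, add_comm] using hm')
  subst this
  simp

theorem dithered_error_uniform_general {n : ℕ}
    (G : Matrix (Fin n) (Fin n) ℝ)
    (P : Set (Fin n → ℝ)) (hPmeas : MeasurableSet P)
    (hPcell : ∀ x : Fin n → ℝ, ∃! j : Fin n → ℤ,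
      x - G.mulVec (fun i => (j i : ℝ)) ∈ P)
    (QP : (Fin n → ℝ) → (Fin n → ℝ)) (hQPmeas : Measurable QP)
    (hQPlat : ∀ x, ∃ j : Fin n → ℤ, QP x = G.mulVec (fun i => (j i : ℝ)))
    (hQPcell : ∀ x, QP x - x ∈ P)
    (x : Fin n → ℝ) :
    Measure.map (fun v => QP (x - v) + v - x) ((volume P)⁻¹ • volume.restrict P)
      = (volume P)⁻¹ • volume.restrict P := by
  let φ : (Fin n → ℤ) →+ (Fin n → ℝ) :=
    G.mulVecLin.toAddMonoidHom.comp (AddMonoidHom.compLeft (Int.castAddHom ℝ) (Fin n))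
  have hP : IsStrictAddFundamentalDomain φ.range P := φ.isStrictAddFundamentalDomain_range hPcell
  have : Countable φ.range := (Set.countable_range φ).to_subtype
  let r : (Fin n → ℝ) → (Fin n → ℝ) := fun y => QP (-y) + y
  have hrm : Measurable r := (hQPmeas.comp measurable_neg).add measurable_id
  have hrP : ∀ y, r y ∈ P := fun y => by simpa [r, sub_neg_eq_add] using hQPcell (-y)
  have hr : ∀ y, r y - y ∈ φ.range := fun y => by
    obtain ⟨j, hj⟩ := hQPlat (-y)
    exact ⟨j, by rw [add_sub_cancel_right, hj]; rfl⟩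
  have hshift : (volume.restrict P).map (· - x) = volume.restrict ((· + x) ⁻¹' P) := by
    simpa only [Set.preimage_preimage, sub_add_cancel, Set.preimage_id'] using
      ((measurePreserving_sub_right volume x).restrict_preimage
        (hPmeas.preimage (measurable_add_const x))).map_eq
  have hf : (fun v => QP (x - v) + v - x) = r ∘ (· - x) := by
    funext v
    simp only [r, Function.comp_apply, neg_sub]
    abel
  rw [Measure.map_smul, hf, ← Measure.map_map hrm (measurable_sub_const x), hshift,
    hP.map_reduction_restrict hPmeas (hP.preimage_add_right x)
      (hPmeas.preimage (measurable_add_const x)) hrm hrP hr]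

/-- Crypto lemma / uniform error property of subtractive dithering. Let `G` be an invertible
`n×n` real matrix defining the lattice `GZⁿ`, let `P` be a basic cell of the lattice
(the translates `P + Gj`, `j ∈ Zⁿ`, partition `ℝⁿ`, expressed via unique existence), and let
`Q_P` map each `x` to the unique lattice point `y` with `x ∈ -P + y` (i.e. `Q_P x - x ∈ P`).
If `V` is uniform on `P`, then for every fixed `x`, the dithered quantization error
`Q_P(x - V) + V - x` is uniform on `P`. -/
theorem dithered_error_uniform {n : ℕ}
    (G : Matrix (Fin n) (Fin n) ℝ) (hG : IsUnit G.det)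
    (P : Set (Fin n → ℝ)) (hPmeas : MeasurableSet P) (hPbd : Bornology.IsBounded P)
    (hPcell : ∀ x : Fin n → ℝ, ∃! j : Fin n → ℤ,
      x - G.mulVec (fun i => (j i : ℝ)) ∈ P)
    (QP : (Fin n → ℝ) → (Fin n → ℝ)) (hQPmeas : Measurable QP)
    (hQPlat : ∀ x, ∃ j : Fin n → ℤ, QP x = G.mulVec (fun i => (j i : ℝ)))
    (hQPcell : ∀ x, QP x - x ∈ P)
    (x : Fin n → ℝ) :
    Measure.map (fun v => QP (x - v) + v - x) ((volume P)⁻¹ • volume.restrict P)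
      = (volume P)⁻¹ • volume.restrict P :=
  dithered_error_uniform_general G P hPmeas hPcell QP hQPmeas hQPlat hQPcell x
end

section
/- Let V be a chi-squared random variable with n+2 degrees of freedom, and conditionally on V = v, let Z be uniformly distributed on the ball √v · B^n ⊆ ℝⁿ. Then Z follows the standard multivariate Gaussian distribution N(0, I_n). -/
/-!
Given `V = v`, the uniform density on `√v Bⁿ` is `1{‖z‖² ≤ v} / (κₙ v^{n/2})`, and the factor
`v^{n/2}` cancels against the χ²_{n+2} density. The mixture density is therefore a constant times
`∫_{‖z‖²}^∞ e^{-v/2} dv = 2 e^{-‖z‖²/2}`, and the constant is `(2π)^{-n/2}` because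
`κₙ = π^{n/2} / Γ(n/2 + 1)`.
-/

open MeasureTheory Real Set

theorem integral_exp_neg_mul_Ioi {c : ℝ} (hc : 0 < c) (s : ℝ) :
    ∫ x in Ioi s, exp (-(c * x)) = exp (-(c * s)) / c := by
  rw [integral_comp_mul_left_Ioi (fun x ↦ exp (-x)) s hc, integral_exp_neg_Ioi, smul_eq_mul,
    inv_mul_eq_div]

theorem setIntegral_Ioi_zero_ite_le {E : Type*} [NormedAddCommGroup E] [NormedSpace ℝ E]
    (f : ℝ → E) {s : ℝ} (hs : 0 ≤ s) :
    ∫ v in Ioi 0, (if s ≤ v then f v else 0) = ∫ v in Ioi s, f v := by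
  have hset : (Ioi 0 ∩ Ici s : Set ℝ) =ᵐ[volume] Ioi s := by
    simpa only [Ioi_inter_Ioi, max_eq_right hs] using
      (Filter.EventuallyEq.refl _ (Ioi (0 : ℝ))).inter (Ioi_ae_eq_Ici (μ := volume) (a := s)).symm
  have hind : (fun v ↦ if s ≤ v then f v else 0) = (Ici s).indicator f := by
    ext v; simp only [indicator_apply, mem_Ici]
  rw [hind, setIntegral_indicator measurableSet_Ici, setIntegral_congr_set hset]

theorem EuclideanSpace.volume_closedBall_zero_one_toReal (ι : Type*) [Fintype ι] :
    (volume (Metric.closedBall (0 : EuclideanSpace ℝ ι) 1)).toReal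
      = π ^ ((Fintype.card ι : ℝ) / 2) / Gamma ((Fintype.card ι : ℝ) / 2 + 1) := by
  cases isEmpty_or_nonempty ι
  · have hball : Metric.closedBall (0 : EuclideanSpace ℝ ι) 1 = univ :=
      eq_univ_of_forall fun x ↦ by simp [Subsingleton.elim x 0]
    rw [hball, ← (PiLp.volume_preserving_toLp ι).measure_preimage
      MeasurableSet.univ.nullMeasurableSet, preimage_univ, volume_pi, Measure.pi_of_empty]
    simp
  · rw [EuclideanSpace.volume_closedBall, ENNReal.ofReal_one, one_pow, one_mul,
      ENNReal.toReal_ofReal (by positivity), sqrt_eq_rpow, ← rpow_natCast, ← rpow_mul pi_pos.le]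
    ring_nf

theorem two_rpow_mul_Gamma_mul_volume_closedBall (n : ℕ) :
    2 ^ (((n : ℝ) + 2) / 2) * Gamma (((n : ℝ) + 2) / 2)
        * (volume (Metric.closedBall (0 : EuclideanSpace ℝ (Fin n)) 1)).toReal
      = 2 * (2 * π) ^ ((n : ℝ) / 2) := by
  rw [EuclideanSpace.volume_closedBall_zero_one_toReal, Fintype.card_fin, add_div,
    div_self two_ne_zero, rpow_add two_pos, rpow_one, mul_rpow zero_le_two pi_pos.le]
  have hΓ := (Gamma_pos_of_pos (by positivity : (0:ℝ) < n / 2 + 1)).ne'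
  field_simp

theorem gaussian_mixture_of_uniform_balls_general (n : ℕ)
    (z : EuclideanSpace ℝ (Fin n)) :
    ∫ v in Set.Ioi (0:ℝ),
        (v ^ ((n : ℝ) / 2) * Real.exp (-v / 2)
            / (2 ^ (((n : ℝ) + 2) / 2) * Real.Gamma (((n : ℝ) + 2) / 2)))
          * (if ‖z‖ ^ 2 ≤ v then 1 else 0)
          / (v ^ ((n : ℝ) / 2)
              * (volume (Metric.closedBall (0 : EuclideanSpace ℝ (Fin n)) 1)).toReal)
      = (2 * π) ^ (-(n : ℝ) / 2) * Real.exp (-‖z‖ ^ 2 / 2) := by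
  set C := 2 ^ (((n : ℝ) + 2) / 2) * Gamma (((n : ℝ) + 2) / 2)
    * (volume (Metric.closedBall (0 : EuclideanSpace ℝ (Fin n)) 1)).toReal
  have hC : C = 2 * (2 * π) ^ ((n : ℝ) / 2) := two_rpow_mul_Gamma_mul_volume_closedBall n
  have hintegrand : EqOn (fun v ↦ v ^ ((n : ℝ) / 2) * exp (-v / 2)
        / (2 ^ (((n : ℝ) + 2) / 2) * Gamma (((n : ℝ) + 2) / 2)) * (if ‖z‖ ^ 2 ≤ v then 1 else 0)
        / (v ^ ((n : ℝ) / 2)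
          * (volume (Metric.closedBall (0 : EuclideanSpace ℝ (Fin n)) 1)).toReal))
      (fun v ↦ if ‖z‖ ^ 2 ≤ v then exp (-(2⁻¹ * v)) / C else 0) (Ioi 0) := by
    intro v (hv : 0 < v)
    have hv' := (rpow_pos_of_pos hv ((n : ℝ) / 2)).ne'
    dsimp only
    split_ifs
    · simp only [C]; field_simp
    · simp
  rw [setIntegral_congr_fun measurableSet_Ioi hintegrand,
    setIntegral_Ioi_zero_ite_le _ (sq_nonneg _), integral_div,
    integral_exp_neg_mul_Ioi (by norm_num), hC, neg_div, rpow_neg (by positivity)]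
  field_simp

/-- A standard Gaussian on `ℝⁿ` is a mixture of uniform distributions on balls, with the
squared radius following a chi-squared distribution with `n+2` degrees of freedom:
for every `z`, the mixture density
`∫₀^∞ f_V(v) · 1{‖z‖² ≤ v} / (v^{n/2} κ_n) dv` equals `(2π)^{-n/2} e^{-‖z‖²/2}`, where
`f_V(v) = v^{n/2} e^{-v/2} / (2^{(n+2)/2} Γ((n+2)/2))` is the χ²_{n+2} density and
`κ_n` is the volume of the unit ball. -/
theorem gaussian_mixture_of_uniform_balls (n : ℕ) (hn : 1 ≤ n)
    (z : EuclideanSpace ℝ (Fin n)) :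
    ∫ v in Set.Ioi (0:ℝ),
        (v ^ ((n : ℝ) / 2) * Real.exp (-v / 2)
            / (2 ^ (((n : ℝ) + 2) / 2) * Real.Gamma (((n : ℝ) + 2) / 2)))
          * (if ‖z‖ ^ 2 ≤ v then 1 else 0)
          / (v ^ ((n : ℝ) / 2)
              * (volume (Metric.closedBall (0 : EuclideanSpace ℝ (Fin n)) 1)).toReal)
      = (2 * π) ^ (-(n : ℝ) / 2) * Real.exp (-‖z‖ ^ 2 / 2) :=
  gaussian_mixture_of_uniform_balls_general n z
end

section
/- For every integer n ≥ 2, the gap between the two rate-distortion lower bounds satisfies (1/2) log₂(2πe/(n+2)) - (1/n) log₂ κ_n ≤ (log₂ n)/(2n) - 0.05/n, where κ_n = π^{n/2}/Γ(n/2+1) is the volume of the unit n-ball. -/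
/-!
Multiplied by `n log 2` and written in `x = n / 2`, the margin of the inequality becomes
`s x = x log (x + 1) - x + log (2x) / 2 - log 2 / 20 - log Γ(x + 1)`. Since
`Γ(x + 2) = (x + 1) Γ(x + 1)`, the increment `s (x + 1) - s x` equals
`(x + 1) log (1 + 1/(x + 1)) - 1 + log (1 + 1/x) / 2`, which the bound
`log (1 + u) ≥ 2u / (u + 2)` makes at least `1/(2x + 1) - 1/(2x + 3) > 0`.
So `s` increases under `x ↦ x + 1`, and it remains to check `s 1 ≥ 0` and `s (3/2) ≥ 0`,
i.e. the cases `n = 2` and `n = 3`.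
-/

open Real

noncomputable def shannonZadorMargin (x : ℝ) : ℝ :=
  x * log (x + 1) - x + log (2 * x) / 2 - log 2 / 20 - log (Gamma (x + 1))

lemma two_div_two_mul_add_one_le_log_add_one_sub_log {y : ℝ} (hy : 0 < y) :
    2 / (2 * y + 1) ≤ log (y + 1) - log y := by
  have h := le_log_one_add_of_nonneg (inv_nonneg.mpr hy.le)
  rw [← log_div (by positivity) hy.ne']
  convert h using 1
  · field_simp; ring
  · congr 1; field_simp

lemma shannonZadorMargin_le_add_one {x : ℝ} (hx : 0 < x) :
    shannonZadorMargin x ≤ shannonZadorMargin (x + 1) := by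
  have hGamma : log (Gamma (x + 1 + 1)) = log (x + 1) + log (Gamma (x + 1)) := by
    rw [Gamma_add_one (by positivity),
      log_mul (by positivity) (Gamma_pos_of_pos (by positivity)).ne']
  have hdouble : log (2 * (x + 1)) - log (2 * x) = log (x + 1) - log x := by
    rw [log_mul two_ne_zero (by positivity), log_mul two_ne_zero hx.ne']; ring
  have hnext := mul_le_mul_of_nonneg_left
    (two_div_two_mul_add_one_le_log_add_one_sub_log (y := x + 1) (by positivity))
    (by positivity : (0 : ℝ) ≤ x + 1)
  rw [mul_sub] at hnext
  have hfrac : (x + 1) * (2 / (2 * (x + 1) + 1)) = 1 - 1 / (2 * x + 3) := by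
    field_simp; ring
  have hrecip : 1 / (2 * x + 3) ≤ 1 / (2 * x + 1) :=
    one_div_le_one_div_of_le (by positivity) (by linarith)
  have hcur : 1 / (2 * x + 1) ≤ (log (x + 1) - log x) / 2 := by
    linarith [two_div_two_mul_add_one_le_log_add_one_sub_log hx,
      show 1 / (2 * x + 1) = (2 / (2 * x + 1)) / 2 by ring]
  rw [shannonZadorMargin, shannonZadorMargin, hGamma]
  linarith

lemma shannonZadorMargin_le_add_nat {x : ℝ} (hx : 0 < x) (k : ℕ) :
    shannonZadorMargin x ≤ shannonZadorMargin (x + k) := by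
  induction k with
  | zero => simp
  | succ k ih =>
    push_cast
    rw [← add_assoc]
    exact ih.trans (shannonZadorMargin_le_add_one (by positivity))

lemma shannonZadorMargin_one_nonneg : 0 ≤ shannonZadorMargin 1 := by
  have h := log_two_gt_d9
  simp only [shannonZadorMargin, one_add_one_eq_two, mul_one, one_mul, Gamma_two, log_one]
  linarith

lemma shannonZadorMargin_three_halves_nonneg : 0 ≤ shannonZadorMargin (3 / 2) := by
  have hGamma : Gamma (3 / 2 + 1) = 3 / 4 * √π := by
    have := Gamma_nat_add_one_add_half 1
    norm_num at this ⊢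
    rw [this]; ring
  have hlogGamma : log (3 / 4 * √π) = log 3 - 2 * log 2 + log π / 2 := by
    rw [log_mul (by norm_num) (by positivity), log_sqrt pi_pos.le,
      log_div (by norm_num) (by norm_num), show (4 : ℝ) = 2 ^ 2 by norm_num, log_pow]
    push_cast; ring
  have hlogNext : log (3 / 2 + 1) = log 5 - log 2 := by
    rw [← log_div (by norm_num) (by norm_num)]; norm_num
  -- `20 s (3/2) = log (5 ^ 30 * 2 ^ 9 / (e ^ 30 * 3 ^ 10 * π ^ 10))`
  have hnum : exp 1 ^ 30 * 3 ^ 10 * π ^ 10 ≤ (5 : ℝ) ^ 30 * 2 ^ 9 :=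
    calc exp 1 ^ 30 * 3 ^ 10 * π ^ 10 ≤ (2.7182818286 : ℝ) ^ 30 * 3 ^ 10 * 3.15 ^ 10 := by
          gcongr
          · exact exp_one_lt_d9.le
          · exact pi_lt_d2.le
      _ ≤ 5 ^ 30 * 2 ^ 9 := by norm_num
  have hlog := log_le_log (by positivity) hnum
  rw [log_mul (by positivity) (by positivity), log_mul (by positivity) (by positivity),
    log_mul (by positivity) (by positivity)] at hlog
  simp only [log_pow, log_exp] at hlog
  rw [shannonZadorMargin, hGamma, hlogGamma, hlogNext, show (2 * (3 / 2) : ℝ) = 3 by norm_num]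
  push_cast at hlog
  linarith

lemma shannonZadorMargin_half_nat_nonneg {n : ℕ} (hn : 2 ≤ n) :
    0 ≤ shannonZadorMargin (n / 2) := by
  obtain ⟨k, rfl | rfl⟩ := Nat.even_or_odd' n
  · obtain ⟨j, rfl⟩ : ∃ j, k = j + 1 := ⟨k - 1, by omega⟩
    have hx : ((2 * (j + 1) : ℕ) : ℝ) / 2 = 1 + j := by push_cast; ring
    rw [hx]
    exact shannonZadorMargin_one_nonneg.trans (shannonZadorMargin_le_add_nat one_pos j)
  · obtain ⟨j, rfl⟩ : ∃ j, k = j + 1 := ⟨k - 1, by omega⟩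
    have hx : ((2 * (j + 1) + 1 : ℕ) : ℝ) / 2 = 3 / 2 + j := by push_cast; ring
    rw [hx]
    exact shannonZadorMargin_three_halves_nonneg.trans
      (shannonZadorMargin_le_add_nat (by norm_num) j)

lemma shannonZador_margin_eq {t : ℝ} (ht : 0 < t) :
    logb 2 t / (2 * t) - 0.05 / t
        - ((1 / 2) * logb 2 (2 * π * exp 1 / (t + 2))
          - (1 / t) * logb 2 (π ^ (t / 2) / Gamma (t / 2 + 1)))
      = shannonZadorMargin (t / 2) / (t * log 2) := by
  have hGamma : 0 < Gamma (t / 2 + 1) := Gamma_pos_of_pos (by positivity)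
  have hA : log (2 * π * exp 1 / (t + 2)) = log π + 1 - log (t / 2 + 1) := by
    rw [log_div (by positivity) (by positivity), log_mul (by positivity) (exp_ne_zero 1),
      log_mul two_ne_zero pi_ne_zero, log_exp, show t + 2 = 2 * (t / 2 + 1) by ring,
      log_mul two_ne_zero (by positivity)]
    ring
  have hB :
      log (π ^ (t / 2) / Gamma (t / 2 + 1)) = t / 2 * log π - log (Gamma (t / 2 + 1)) := by
    rw [log_div (by positivity) hGamma.ne', log_rpow pi_pos]
  rw [shannonZadorMargin, mul_div_cancel₀ t two_ne_zero]
  simp only [logb, hA, hB]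
  field_simp
  ring

/-- For every integer `n ≥ 2`, the gap between Shannon's and Zador's rate-distortion lower
bounds satisfies `(1/2) log₂(2πe/(n+2)) - (1/n) log₂ κ_n ≤ (log₂ n)/(2n) - 0.05/n`, where
`κ_n = π^{n/2} / Γ(n/2+1)` is the volume of the unit `n`-ball. -/
theorem shannon_zador_gap_bound (n : ℕ) (hn : 2 ≤ n) :
    (1 / 2) * Real.logb 2 (2 * π * Real.exp 1 / ((n : ℝ) + 2))
        - (1 / (n : ℝ)) * Real.logb 2 (π ^ ((n : ℝ) / 2) / Real.Gamma ((n : ℝ) / 2 + 1))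
      ≤ Real.logb 2 (n : ℝ) / (2 * (n : ℝ)) - 0.05 / (n : ℝ) := by
  have hn0 : (0 : ℝ) < n := by exact_mod_cast (by omega : 0 < n)
  rw [← sub_nonneg, shannonZador_margin_eq hn0]
  exact div_nonneg (shannonZadorMargin_half_nat_nonneg hn) (by positivity)
end
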